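/- Define ℋ := (𝒦 × 𝕌) ∪ {(x,u) ∈ ℝ^d × 𝕌 : r(x,u) > h(x,u)}. Then there exist a constant k₀ ≥ 2 and an inf-compact function h̃ ∈ C(ℝ^d × 𝕌), locally Lipschitz in its first argument uniformly with respect to its second argument, such that r(x,u) ≤ h̃(x,u) ≤ (k₀/2)(1 + h(x,u)𝟙_{ℋ^c}(x,u) + r(x,u)𝟙_{ℋ}(x,u)) for all (x,u) ∈ ℝ^d × 𝕌. Moreover, L^u𝒱(x) ≤ 1 − h(x,u)𝟙_{ℋ^c}(x,u) + r(x,u)𝟙_{ℋ}(x,u) for all (x,u) ∈ ℝ^d × 𝕌, where 𝒱 is the function from Assumption 1. -/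
import Mathlib


set_option autoImplicit false

open Matrix Set MeasureTheory

noncomputable section

abbrev EucSp (d : ℕ) := EuclideanSpace ℝ (Fin d)

/-- First partial derivative `∂f/∂xᵢ`. -/
noncomputable def pd1 {d : ℕ} (f : EucSp d → ℝ) (i : Fin d) (x : EucSp d) : ℝ :=
  fderiv ℝ f x (EuclideanSpace.single i 1)

/-- Second partial derivative `∂²f/∂xᵢ∂xⱼ`. -/
noncomputable def pd2 {d : ℕ} (f : EucSp d → ℝ) (i j : Fin d) (x : EucSp d) : ℝ :=
  fderiv ℝ (fun y => fderiv ℝ f y (EuclideanSpace.single j 1)) x (EuclideanSpace.single i 1)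

/-- The controlled extended generator
`L^u f(x) = (1/2)Σᵢⱼ aⁱʲ(x)∂ᵢⱼf(x) + Σᵢ bⁱ(x,u)∂ᵢf(x)` with `a = σσᵀ`. -/
noncomputable def Lgen {d : ℕ} {U : Type*} (σ : EucSp d → Matrix (Fin d) (Fin d) ℝ)
    (b : EucSp d → U → EucSp d) (u : U) (f : EucSp d → ℝ) (x : EucSp d) : ℝ :=
  (1/2) * ∑ i, ∑ j, (σ x * (σ x)ᵀ) i j * pd2 f i j x + ∑ i, b x u i * pd1 f i x

/-- The set `ℋ := (𝒦 × 𝕌) ∪ {(x,u) : r(x,u) > h(x,u)}`. -/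
def HH {d : ℕ} {U : Type*} (K : Set (EucSp d)) (r h : EucSp d → U → ℝ) :
    Set (EucSp d × U) :=
  (K ×ˢ (univ : Set U)) ∪ {p | h p.1 p.2 < r p.1 p.2}



open scoped Classical in
noncomputable def qfun {d : ℕ} {U : Type*} (K : Set (EucSp d)) (r h : EucSp d → U → ℝ)
    (p : EucSp d × U) : ℝ :=
  if p ∈ HH K r h then r p.1 p.2 else h p.1 p.2

noncomputable def mfun {d : ℕ} {U : Type*} [Nonempty U] (K : Set (EucSp d))
    (r h : EucSp d → U → ℝ) (x : EucSp d) : ℝ :=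
  ⨅ u : U, qfun K r h (x, u)

noncomputable def gfun {d : ℕ} (M : EucSp d → ℝ) (x : EucSp d) : ℝ :=
  ⨅ y : EucSp d, (M y + ‖x - y‖)

section lemmas
variable {d : ℕ} {U : Type*} [Nonempty U] (K : Set (EucSp d)) (r h : EucSp d → U → ℝ)

lemma mem_HH_iff (x : EucSp d) (u : U) : (x, u) ∈ HH K r h ↔ x ∈ K ∨ h x u < r x u := by
  simp [HH]

lemma qfun_nonneg (hr : ∀ x u, 0 ≤ r x u) (hh : ∀ x u, 0 ≤ h x u) (p : EucSp d × U) :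
    0 ≤ qfun K r h p := by
  unfold qfun; split
  · exact hr _ _
  · exact hh _ _

lemma mfun_le (hr : ∀ x u, 0 ≤ r x u) (hh : ∀ x u, 0 ≤ h x u) (x : EucSp d) (u : U) :
    mfun K r h x ≤ qfun K r h (x, u) :=
  ciInf_le ⟨0, by rintro z ⟨v, rfl⟩; exact qfun_nonneg K r h hr hh _⟩ u

lemma mfun_nonneg (hr : ∀ x u, 0 ≤ r x u) (hh : ∀ x u, 0 ≤ h x u) (x : EucSp d) :
    0 ≤ mfun K r h x :=
  le_ciInf fun u => qfun_nonneg K r h hr hh _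

variable {M : EucSp d → ℝ}

lemma gfun_bdd (hM : ∀ y, 0 ≤ M y) (x : EucSp d) :
    BddBelow (Set.range fun y : EucSp d => M y + ‖x - y‖) :=
  ⟨0, by rintro z ⟨y, rfl⟩; exact add_nonneg (hM y) (norm_nonneg _)⟩

lemma gfun_le (hM : ∀ y, 0 ≤ M y) (x : EucSp d) : gfun M x ≤ M x := by
  have := ciInf_le (gfun_bdd hM x) x
  simpa [gfun] using this

lemma gfun_nonneg (hM : ∀ y, 0 ≤ M y) (x : EucSp d) : 0 ≤ gfun M x :=
  le_ciInf fun y => add_nonneg (hM y) (norm_nonneg _)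

lemma gfun_sub_le (hM : ∀ y, 0 ≤ M y) (x x' : EucSp d) :
    gfun M x ≤ gfun M x' + ‖x - x'‖ := by
  have key : ∀ y, gfun M x - ‖x - x'‖ ≤ M y + ‖x' - y‖ := by
    intro y
    have h1 : gfun M x ≤ M y + ‖x - y‖ := ciInf_le (gfun_bdd hM x) y
    have h2 : ‖x - y‖ ≤ ‖x - x'‖ + ‖x' - y‖ := by
      simpa [sub_add_sub_cancel] using norm_add_le (x - x') (x' - y)
    linarith
  have := le_ciInf key
  have hg : gfun M x' = ⨅ y : EucSp d, (M y + ‖x' - y‖) := rfl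
  linarith [hg ▸ this]

lemma gfun_abs_sub (hM : ∀ y, 0 ≤ M y) (x y : EucSp d) :
    |gfun M x - gfun M y| ≤ ‖x - y‖ := by
  rw [abs_sub_le_iff]
  constructor
  · linarith [gfun_sub_le hM x y]
  · have := gfun_sub_le hM y x
    rw [norm_sub_rev] at this
    linarith

lemma gfun_cont (hM : ∀ y, 0 ≤ M y) : Continuous (gfun M) := by
  have : LipschitzWith 1 (gfun M) := by
    apply LipschitzWith.of_dist_le_mul
    intro x y
    rw [Real.dist_eq, dist_eq_norm]
    simpa using gfun_abs_sub hM x y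
  exact this.continuous

end lemmas


theorem stmt4 (d : ℕ) (hd : 1 ≤ d)
    {U : Type*} [MetricSpace U] [CompactSpace U] [Nonempty U]
    (b : EucSp d → U → EucSp d) (σ : EucSp d → Matrix (Fin d) (Fin d) ℝ)
    (hbcont : Continuous fun p : EucSp d × U => b p.1 p.2)
    (hblip : ∀ R > 0, ∃ C > 0, ∀ x ∈ Metric.closedBall (0 : EucSp d) R,
      ∀ y ∈ Metric.closedBall (0 : EucSp d) R, ∀ u : U, ‖b x u - b y u‖ ≤ C * ‖x - y‖)
    (hσlip : ∀ R > 0, ∃ C > 0, ∀ x ∈ Metric.closedBall (0 : EucSp d) R,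
      ∀ y ∈ Metric.closedBall (0 : EucSp d) R, ∀ i j, |σ x i j - σ y i j| ≤ C * ‖x - y‖)
    (hgrowth : ∃ C₁ > 0, ∀ (x : EucSp d) (u : U),
      ‖b x u‖ ^ 2 + ∑ i, ∑ j, (σ x i j) ^ 2 ≤ C₁ * (1 + ‖x‖ ^ 2))
    (hellip : ∀ R > 0, ∃ C > 0, ∀ x ∈ Metric.closedBall (0 : EucSp d) R,
      ∀ ξ : Fin d → ℝ, C⁻¹ * ∑ i, ξ i ^ 2 ≤ ∑ i, ∑ j, ξ i * ((σ x * (σ x)ᵀ) i j * ξ j))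
    (r : EucSp d → U → ℝ)
    (hrnn : ∀ x u, 0 ≤ r x u)
    (hrcont : Continuous fun p : EucSp d × U => r p.1 p.2)
    (hrlip : ∀ R > 0, ∃ C > 0, ∀ x ∈ Metric.closedBall (0 : EucSp d) R,
      ∀ y ∈ Metric.closedBall (0 : EucSp d) R, ∀ u : U, |r x u - r y u| ≤ C * ‖x - y‖)
    -- Assumption 1
    (K : Set (EucSp d)) (hKopen : IsOpen K)
    (V : EucSp d → ℝ) (hV : ContDiff ℝ 2 V) (hVnn : ∀ x, 0 ≤ V x)
    (hVinf : ∀ c : ℝ, IsCompact {x : EucSp d | V x ≤ c})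
    (h : EucSp d → U → ℝ) (hhcont : Continuous fun p : EucSp d × U => h p.1 p.2)
    (hhnn : ∀ x u, 0 ≤ h x u)
    (hhinf : ∀ c : ℝ, IsCompact {p : EucSp d × U | h p.1 p.2 ≤ c})
    (hrK : ∀ c : ℝ, IsCompact {x ∈ closure K | (⨅ u : U, r x u) ≤ c})
    (hLV1 : ∀ x ∉ K, ∀ u : U, Lgen σ b u V x ≤ 1 - h x u)
    (hLV2 : ∀ x ∈ K, ∀ u : U, Lgen σ b u V x ≤ 1 + r x u) :
    ∃ k₀ : ℝ, 2 ≤ k₀ ∧ ∃ htil : EucSp d → U → ℝ,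
      (Continuous fun p : EucSp d × U => htil p.1 p.2) ∧
      (∀ c : ℝ, IsCompact {p : EucSp d × U | htil p.1 p.2 ≤ c}) ∧
      (∀ R > 0, ∃ C > 0, ∀ x ∈ Metric.closedBall (0 : EucSp d) R,
        ∀ y ∈ Metric.closedBall (0 : EucSp d) R, ∀ u : U,
          |htil x u - htil y u| ≤ C * ‖x - y‖) ∧
      (∀ (x : EucSp d) (u : U), r x u ≤ htil x u) ∧
      (∀ (x : EucSp d) (u : U),
        htil x u ≤ (k₀ / 2) *
          (1 + h x u * Set.indicator (HH K r h)ᶜ (fun _ => (1:ℝ)) (x, u)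
             + r x u * Set.indicator (HH K r h) (fun _ => (1:ℝ)) (x, u))) ∧
      (∀ (x : EucSp d) (u : U),
        Lgen σ b u V x ≤
          1 - h x u * Set.indicator (HH K r h)ᶜ (fun _ => (1:ℝ)) (x, u)
            + r x u * Set.indicator (HH K r h) (fun _ => (1:ℝ)) (x, u)) := by
  classical
  have hqnn := qfun_nonneg K r h hrnn hhnn
  have hmnn := mfun_nonneg K r h hrnn hhnn
  set G : EucSp d → ℝ := gfun (mfun K r h) with hGdef
  have hGle : ∀ x, G x ≤ mfun K r h x := gfun_le hmnn
  have hGabs : ∀ x y, |G x - G y| ≤ ‖x - y‖ := gfun_abs_sub hmnn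
  have hGcont : Continuous G := gfun_cont hmnn
  refine ⟨2, le_refl 2, fun x u => max (r x u) (G x), ?_, ?_, ?_, ?_, ?_, ?_⟩
  · exact hrcont.max (hGcont.comp continuous_fst)
  · -- inf-compactness
    intro c
    have hAcomp : IsCompact ((Prod.fst '' {p : EucSp d × U | h p.1 p.2 ≤ c + 1}) ∪
        {x ∈ closure K | (⨅ u : U, r x u) ≤ c + 1}) :=
      ((hhinf (c + 1)).image continuous_fst).union (hrK (c + 1))
    obtain ⟨R, hR⟩ := hAcomp.isBounded.subset_closedBall 0
    have hclosed : IsClosed {p : EucSp d × U | max (r p.1 p.2) (G p.1) ≤ c} :=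
      isClosed_le (hrcont.max (hGcont.comp continuous_fst)) continuous_const
    have hsub : {p : EucSp d × U | max (r p.1 p.2) (G p.1) ≤ c} ⊆
        (Metric.closedBall (0 : EucSp d) (R + (c + 1))) ×ˢ (univ : Set U) := by
      rintro ⟨x, u⟩ hp
      have hGx : G x ≤ c := le_trans (le_max_right _ _) hp
      have hGx' : gfun (mfun K r h) x < c + 1 := lt_of_le_of_lt hGx (lt_add_one c)
      obtain ⟨y, hy⟩ := exists_lt_of_ciInf_lt hGx'
      have hmy : mfun K r h y < c + 1 := by
        have := norm_nonneg (x - y); linarith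
      have hxy : ‖x - y‖ < c + 1 := by
        have := hmnn y; linarith
      obtain ⟨v, hv⟩ := exists_lt_of_ciInf_lt hmy
      have hyA : y ∈ (Prod.fst '' {p : EucSp d × U | h p.1 p.2 ≤ c + 1}) ∪
          {x ∈ closure K | (⨅ u : U, r x u) ≤ c + 1} := by
        by_cases hyK : y ∈ K
        · right
          refine ⟨subset_closure hyK, ?_⟩
          have hq : qfun K r h (y, v) = r y v := by
            unfold qfun
            rw [if_pos ((mem_HH_iff K r h y v).2 (Or.inl hyK))]
          have hle : (⨅ u : U, r y u) ≤ r y v :=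
            ciInf_le ⟨0, by rintro z ⟨w, rfl⟩; exact hrnn _ _⟩ v
          rw [hq] at hv
          linarith
        · left
          by_cases hyH : (y, v) ∈ HH K r h
          · have hlt : h y v < r y v := by
              rcases (mem_HH_iff K r h y v).1 hyH with h1 | h2
              · exact absurd h1 hyK
              · exact h2
            have hq : qfun K r h (y, v) = r y v := by unfold qfun; rw [if_pos hyH]
            rw [hq] at hv
            exact ⟨(y, v), by simp only [Set.mem_setOf_eq]; linarith, rfl⟩
          · have hq : qfun K r h (y, v) = h y v := by unfold qfun; rw [if_neg hyH]
            rw [hq] at hv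
            exact ⟨(y, v), by simp only [Set.mem_setOf_eq]; linarith, rfl⟩
      have hyR : ‖y‖ ≤ R := by simpa using hR hyA
      refine ⟨?_, Set.mem_univ u⟩
      rw [Metric.mem_closedBall, dist_zero_right]
      have hxe : x = y + (x - y) := by abel
      calc ‖x‖ = ‖y + (x - y)‖ := by rw [← hxe]
        _ ≤ ‖y‖ + ‖x - y‖ := norm_add_le _ _
        _ ≤ R + (c + 1) := by linarith
    exact ((isCompact_closedBall _ _).prod isCompact_univ).of_isClosed_subset hclosed hsub
  · -- local Lipschitz
    intro R hR
    obtain ⟨C, hC, hCl⟩ := hrlip R hR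
    refine ⟨C + 1, by linarith, ?_⟩
    intro x hx y hy u
    have h1 : |max (r x u) (G x) - max (r y u) (G y)| ≤
        max (|r x u - r y u|) (|G x - G y|) := abs_max_sub_max_le_max _ _ _ _
    have h2 : |r x u - r y u| ≤ C * ‖x - y‖ := hCl x hx y hy u
    have h3 : |G x - G y| ≤ ‖x - y‖ := hGabs x y
    have hn : (0:ℝ) ≤ ‖x - y‖ := norm_nonneg _
    refine h1.trans (max_le ?_ ?_) <;> nlinarith
  · intro x u; exact le_max_left _ _
  · -- upper bound
    intro x u
    norm_num only
    by_cases hx : (x, u) ∈ HH K r h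
    · rw [Set.indicator_of_mem hx, Set.indicator_of_notMem (by simp [hx] : (x,u) ∉ (HH K r h)ᶜ)]
      have hq : qfun K r h (x, u) = r x u := by unfold qfun; rw [if_pos hx]
      have := (hGle x).trans ((mfun_le K r h hrnn hhnn x u).trans_eq hq)
      have := hrnn x u
      rw [mul_zero, mul_one]
      apply max_le <;> linarith
    · rw [Set.indicator_of_notMem hx, Set.indicator_of_mem (by simpa using hx : (x,u) ∈ (HH K r h)ᶜ)]
      have hq : qfun K r h (x, u) = h x u := by unfold qfun; rw [if_neg hx]
      have hG := (hGle x).trans ((mfun_le K r h hrnn hhnn x u).trans_eq hq)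
      have hrh : r x u ≤ h x u := by
        by_contra hc
        exact hx ((mem_HH_iff K r h x u).2 (Or.inr (lt_of_not_ge hc)))
      rw [mul_zero, mul_one]
      apply max_le <;> linarith
  · -- generator bound
    intro x u
    by_cases hx : (x, u) ∈ HH K r h
    · rw [Set.indicator_of_mem hx, Set.indicator_of_notMem (by simp [hx] : (x,u) ∉ (HH K r h)ᶜ)]
      rw [mul_zero, mul_one]
      by_cases hxK : x ∈ K
      · have := hLV2 x hxK u; linarith
      · have := hLV1 x hxK u
        have := hrnn x u; have := hhnn x u
        linarith
    · rw [Set.indicator_of_notMem hx, Set.indicator_of_mem (by simpa using hx : (x,u) ∈ (HH K r h)ᶜ)]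
      have hxK : x ∉ K := fun hc => hx ((mem_HH_iff K r h x u).2 (Or.inl hc))
      have := hLV1 x hxK u
      rw [mul_zero, mul_one]
      linarith
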